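/- arXiv:2009.14309 — 6 statements merged into one kernel-verified Lean document; each statement's English description precedes it below -/
import Mathlib

section
/- Let n ≥ 1 and let ρ₀, …, ρₙ be positive integers with gcd(ρ₀, …, ρₙ) = 1. Set dᵢ := gcd of {ρⱼ : j ≠ i}, sᵢ := lcm of {dⱼ : j ≠ i}, s := lcm(s₀, …, sₙ), and ρᵢ' := ρᵢ/sᵢ. Then lcm(ρ₀, …, ρₙ) = s · lcm(ρ₀', …, ρₙ'). -/
open Finset

lemma finset_lcm_ne_zero {ι : Type*} [DecidableEq ι] (t : Finset ι) (f : ι → ℕ)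
    (hf : ∀ i ∈ t, f i ≠ 0) : t.lcm f ≠ 0 := by
  intro h
  rw [Finset.lcm_eq_zero_iff] at h
  obtain ⟨i, hi, h0⟩ := h
  exact hf i hi h0

lemma finset_gcd_ne_zero {ι : Type*} [DecidableEq ι] (t : Finset ι) (ht : t.Nonempty)
    (f : ι → ℕ) (hf : ∀ i ∈ t, f i ≠ 0) : t.gcd f ≠ 0 := by
  intro h
  rw [Finset.gcd_eq_zero_iff] at h
  obtain ⟨i, hi⟩ := ht
  exact hf i hi (h i hi)

lemma fact_lcm {ι : Type*} [DecidableEq ι] (t : Finset ι) (ht : t.Nonempty) (f : ι → ℕ)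
    (hf : ∀ i ∈ t, f i ≠ 0) (p : ℕ) :
    (t.lcm f).factorization p = t.sup' ht (fun i => (f i).factorization p) := by
  revert hf
  induction ht using Finset.Nonempty.cons_induction with
  | singleton i => intro hf; simp
  | cons i t hi ht ih =>
    intro hf
    rw [Finset.sup'_cons, Finset.cons_eq_insert, Finset.lcm_insert, lcm_eq_nat_lcm,
      Nat.factorization_lcm (hf i (Finset.mem_cons_self i t))
        (finset_lcm_ne_zero t f (fun j hj => hf j (Finset.mem_cons_of_mem hj))),
      Finsupp.sup_apply, ih (fun j hj => hf j (Finset.mem_cons_of_mem hj))]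

lemma fact_gcd {ι : Type*} [DecidableEq ι] (t : Finset ι) (ht : t.Nonempty) (f : ι → ℕ)
    (hf : ∀ i ∈ t, f i ≠ 0) (p : ℕ) :
    (t.gcd f).factorization p = t.inf' ht (fun i => (f i).factorization p) := by
  revert hf
  induction ht using Finset.Nonempty.cons_induction with
  | singleton i => intro hf; simp
  | cons i t hi ht ih =>
    intro hf
    rw [Finset.inf'_cons, Finset.cons_eq_insert, Finset.gcd_insert, gcd_eq_nat_gcd,
      Nat.factorization_gcd (hf i (Finset.mem_cons_self i t))
        (finset_gcd_ne_zero t ht f (fun j hj => hf j (Finset.mem_cons_of_mem hj))),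
      Finsupp.inf_apply, ih (fun j hj => hf j (Finset.mem_cons_of_mem hj))]

/-- Reduction of weights: lcm(ρ) = s · lcm(ρ') where ρᵢ' = ρᵢ/sᵢ. -/
theorem stmt_4 (n : ℕ) (hn : 1 ≤ n) (ρ : Fin (n + 1) → ℕ) (hρ : ∀ i, 0 < ρ i)
    (hgcd : Finset.univ.gcd ρ = 1) (d s : Fin (n + 1) → ℕ)
    (hd : ∀ i, d i = (Finset.univ.erase i).gcd ρ)
    (hs : ∀ i, s i = (Finset.univ.erase i).lcm d)
    (ρ' : Fin (n + 1) → ℕ) (hρ' : ∀ i, ρ' i = ρ i / s i) :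
    Finset.univ.lcm ρ = Finset.univ.lcm s * Finset.univ.lcm ρ' := by
  have hρ0 : ∀ i, ρ i ≠ 0 := fun i => (hρ i).ne'
  have hne : ∀ i : Fin (n + 1), (Finset.univ.erase i).Nonempty := by
    intro i
    rw [← Finset.card_pos, Finset.card_erase_of_mem (Finset.mem_univ i), Finset.card_univ,
      Fintype.card_fin]
    omega
  have hd0 : ∀ i, d i ≠ 0 := fun i => by
    rw [hd i]; exact finset_gcd_ne_zero _ (hne i) ρ (fun j _ => hρ0 j)
  have hs0 : ∀ i, s i ≠ 0 := fun i => by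
    rw [hs i]; exact finset_lcm_ne_zero _ d (fun j _ => hd0 j)
  have hsd : ∀ i, s i ∣ ρ i := by
    intro i
    rw [hs i]
    apply Finset.lcm_dvd
    intro j hj
    rw [hd j]
    exact Finset.gcd_dvd (Finset.mem_erase.mpr ⟨(Finset.mem_erase.mp hj).1.symm,
      Finset.mem_univ i⟩)
  have hρ'0 : ∀ i, ρ' i ≠ 0 := fun i => by
    rw [hρ' i]
    exact (Nat.div_pos (Nat.le_of_dvd (hρ i) (hsd i)) (Nat.pos_of_ne_zero (hs0 i))).ne'
  have hU : (Finset.univ : Finset (Fin (n + 1))).Nonempty := Finset.univ_nonempty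
  have hLρ : Finset.univ.lcm ρ ≠ 0 := finset_lcm_ne_zero _ ρ (fun j _ => hρ0 j)
  have hLs : Finset.univ.lcm s ≠ 0 := finset_lcm_ne_zero _ s (fun j _ => hs0 j)
  have hLρ' : Finset.univ.lcm ρ' ≠ 0 := finset_lcm_ne_zero _ ρ' (fun j _ => hρ'0 j)
  rw [Nat.eq_iff_prime_padicValNat_eq _ _ hLρ (mul_ne_zero hLs hLρ')]
  intro p hp
  rw [← Nat.factorization_def _ hp, ← Nat.factorization_def _ hp,
    Nat.factorization_mul hLs hLρ', Finsupp.add_apply,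
    fact_lcm _ hU ρ (fun j _ => hρ0 j) p, fact_lcm _ hU s (fun j _ => hs0 j) p,
    fact_lcm _ hU ρ' (fun j _ => hρ'0 j) p]
  -- exponent function
  set E : Fin (n + 1) → ℕ := fun i => (ρ i).factorization p with hE
  -- find index with minimal (zero) exponent
  have hinf0 : Finset.univ.inf' hU E = 0 := by
    rw [← fact_gcd _ hU ρ (fun j _ => hρ0 j) p, hgcd, Nat.factorization_one, Finsupp.coe_zero,
      Pi.zero_apply]
  obtain ⟨m, -, hm⟩ := Finset.exists_mem_eq_inf' hU E
  rw [hinf0] at hm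
  have hm0 : E m = 0 := hm.symm
  -- exponents of d
  have hDdef : ∀ j, (d j).factorization p = (Finset.univ.erase j).inf' (hne j) E := fun j => by
    rw [hd j]; exact fact_gcd _ (hne j) ρ (fun k _ => hρ0 k) p
  have hDj : ∀ j, j ≠ m → (d j).factorization p = 0 := by
    intro j hjm
    refine Nat.le_zero.mp ?_
    rw [hDdef j, ← hm0]
    exact Finset.inf'_le E (Finset.mem_erase.mpr ⟨Ne.symm hjm, Finset.mem_univ m⟩)
  set e2 : ℕ := (Finset.univ.erase m).inf' (hne m) E with he2
  have hDm : (d m).factorization p = e2 := hDdef m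
  -- exponents of s
  have hSdef : ∀ i, (s i).factorization p =
      (Finset.univ.erase i).sup' (hne i) (fun j => (d j).factorization p) := fun i => by
    rw [hs i]; exact fact_lcm _ (hne i) d (fun j _ => hd0 j) p
  have hSi : ∀ i, i ≠ m → (s i).factorization p = e2 := by
    intro i him
    rw [hSdef i]
    apply le_antisymm
    · apply Finset.sup'_le
      intro j hj
      by_cases hjm : j = m
      · rw [hjm, hDm]
      · rw [hDj j hjm]; exact Nat.zero_le _
    · rw [← hDm]
      exact Finset.le_sup' (fun j => (d j).factorization p)
        (Finset.mem_erase.mpr ⟨Ne.symm him, Finset.mem_univ m⟩)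
  have hSm : (s m).factorization p = 0 := by
    refine Nat.le_zero.mp ?_
    rw [hSdef m]
    exact Finset.sup'_le _ _ (fun j hj => Nat.le_zero.mpr (hDj j (Finset.mem_erase.mp hj).1))
  -- sup of s exponents is e2
  obtain ⟨i₀, hi₀⟩ := Fintype.exists_ne_of_one_lt_card (by simp; omega) m
  have hsupS : Finset.univ.sup' hU (fun i => (s i).factorization p) = e2 := by
    apply le_antisymm
    · apply Finset.sup'_le
      intro i _
      by_cases him : i = m
      · rw [him, hSm]; exact Nat.zero_le _
      · rw [hSi i him]
    · rw [← hSi i₀ hi₀]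
      exact Finset.le_sup' (fun i => (s i).factorization p) (Finset.mem_univ i₀)
  -- exponents of ρ'
  have hρ'E : ∀ i, (ρ' i).factorization p = E i - (s i).factorization p := fun i => by
    rw [hρ' i, Nat.factorization_div (hsd i), Finsupp.tsub_apply]
  -- max exponent over all equals max over erase m
  set E' : ℕ := (Finset.univ.erase m).sup' (hne m) E with hE'
  have he2E' : e2 ≤ E' := by
    obtain ⟨j₀, hj₀⟩ := hne m
    exact le_trans (Finset.inf'_le E hj₀) (Finset.le_sup' E hj₀)
  have hsupE : Finset.univ.sup' hU E = E' := by
    apply le_antisymm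
    · apply Finset.sup'_le
      intro i _
      by_cases him : i = m
      · rw [him, hm0]; exact Nat.zero_le _
      · exact Finset.le_sup' E (Finset.mem_erase.mpr ⟨him, Finset.mem_univ i⟩)
    · exact Finset.sup'_le _ _ (fun i _ => Finset.le_sup' E (Finset.mem_univ i))
  have hsupρ' : Finset.univ.sup' hU (fun i => (ρ' i).factorization p) = E' - e2 := by
    apply le_antisymm
    · apply Finset.sup'_le
      intro i _
      rw [hρ'E i]
      by_cases him : i = m
      · rw [him, hm0, hSm]; exact Nat.zero_le _
      · rw [hSi i him]
        exact Nat.sub_le_sub_right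
          (Finset.le_sup' E (Finset.mem_erase.mpr ⟨him, Finset.mem_univ i⟩)) e2
    · obtain ⟨j, hj, hjE⟩ := Finset.exists_mem_eq_sup' (hne m) E
      have hjm : j ≠ m := (Finset.mem_erase.mp hj).1
      calc E' - e2 = (ρ' j).factorization p := by
            rw [hρ'E j, hSi j hjm, ← hjE]
        _ ≤ _ := Finset.le_sup' (fun i => (ρ' i).factorization p) (Finset.mem_univ j)
  rw [hsupE, hsupS, hsupρ']
  omega
end

section
/- Let n ≥ 1, let ρ₀, …, ρₙ be positive integers with gcd(ρ₀, …, ρₙ) = 1, set dᵢ := gcd of {ρⱼ : j ≠ i}, sᵢ := lcm of {dⱼ : j ≠ i}, and ρᵢ' := ρᵢ/sᵢ. Then the reduced weight vector ρ' = (ρ₀', …, ρₙ') satisfies condition (N): for every i, gcd of {ρⱼ' : j ≠ i} equals 1. -/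
/-- The reduced weight vector ρ' with ρᵢ' = ρᵢ/sᵢ satisfies condition (N):
gcd{ρⱼ' : j ≠ i} = 1 for all i. -/
theorem stmt_5 (n : ℕ) (hn : 1 ≤ n) (ρ : Fin (n + 1) → ℕ) (hρ : ∀ i, 0 < ρ i)
    (hgcd : Finset.univ.gcd ρ = 1) (d s : Fin (n + 1) → ℕ)
    (hd : ∀ i, d i = (Finset.univ.erase i).gcd ρ)
    (hs : ∀ i, s i = (Finset.univ.erase i).lcm d)
    (ρ' : Fin (n + 1) → ℕ) (hρ' : ∀ i, ρ' i = ρ i / s i) :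
    ∀ i, (Finset.univ.erase i).gcd ρ' = 1 := by
  have herase : ∀ j : Fin (n + 1), (Finset.univ.erase j).Nonempty := by
    intro j
    rw [← Finset.card_pos, Finset.card_erase_of_mem (Finset.mem_univ j),
      Finset.card_univ, Fintype.card_fin]
    omega
  have hdpos : ∀ j, d j ≠ 0 := by
    intro j hj
    rw [hd j, Finset.gcd_eq_zero_iff] at hj
    obtain ⟨k, hk⟩ := herase j
    exact (hρ k).ne' (hj k hk)
  have hdvd_s : ∀ i j : Fin (n + 1), i ≠ j → d i ∣ s j := by
    intro i j h
    rw [hs]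
    exact Finset.dvd_lcm (Finset.mem_erase.mpr ⟨h, Finset.mem_univ i⟩)
  have hs_dvd : ∀ j, s j ∣ ρ j := by
    intro j
    rw [hs]
    apply Finset.lcm_dvd
    intro k hk
    rw [hd]
    exact Finset.gcd_dvd
      (Finset.mem_erase.mpr ⟨Ne.symm (Finset.mem_erase.mp hk).1, Finset.mem_univ j⟩)
  have hmul : ∀ j, s j * ρ' j = ρ j := by
    intro j
    rw [hρ' j, Nat.mul_div_cancel' (hs_dvd j)]
  intro i
  by_contra h1
  obtain ⟨p, hp, hpg⟩ := Nat.exists_prime_and_dvd h1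
  have key : ∀ j ∈ Finset.univ.erase i, p * d i ∣ ρ j := by
    intro j hj
    have hij : i ≠ j := Ne.symm (Finset.mem_erase.mp hj).1
    have h2 : p * d i ∣ p * s j := mul_dvd_mul_left p (hdvd_s i j hij)
    refine h2.trans ?_
    obtain ⟨k, hk⟩ := hpg.trans (Finset.gcd_dvd hj)
    exact ⟨k, by rw [← hmul j, hk]; ring⟩
  have hdd : p * d i ∣ d i := by
    have := Finset.dvd_gcd key
    rwa [← hd] at this
  have hle := Nat.le_of_dvd (Nat.pos_of_ne_zero (hdpos i)) hdd
  have h2 := hp.two_le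
  have := Nat.pos_of_ne_zero (hdpos i)
  nlinarith
end

section
/- Let p be a prime, let n ≥ 2, and let e₁, …, eₙ be nonnegative integers. With Y as above (0-th row (−p^{e₁}, …, −p^{eₙ}), other rows the standard basis vectors of ℤⁿ), fix indices 1 ≤ i₁ < i₂ ≤ n and let Y_{i₁,i₂} be the (n−1) × n matrix obtained from Y by deleting rows i₁ and i₂. Then the cokernel of the induced map ℤⁿ → ℤ^{n−1} is isomorphic to ℤ/p^{min(e_{i₁}, e_{i₂})}ℤ. -/
/-- With Y as before (0-th row (−p^{e₁},…,−p^{eₙ}), remaining rows the standard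
basis vectors of ℤⁿ), deleting the two rows i₁, i₂ (1 ≤ i₁ < i₂ ≤ n) yields an
(n−1)×n matrix whose cokernel is ℤ/p^{min(e_{i₁},e_{i₂})}ℤ. -/
theorem stmt_14 (p : ℕ) (hp : p.Prime) (n : ℕ) (hn : 2 ≤ n)
    (e : Fin n → ℕ)
    (Y : Matrix (Fin (n + 1)) (Fin n) ℤ)
    (hY0 : ∀ j, Y 0 j = -(p : ℤ) ^ e j)
    (hY : ∀ i j : Fin n, Y i.succ j = if i = j then 1 else 0)
    (i₁ i₂ : Fin n) (hlt : i₁ < i₂)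
    (Y' : Matrix {k : Fin (n + 1) // k ≠ i₁.succ ∧ k ≠ i₂.succ} (Fin n) ℤ)
    (hY' : ∀ k j, Y' k j = Y k.1 j) :
    Nonempty ((({k : Fin (n + 1) // k ≠ i₁.succ ∧ k ≠ i₂.succ} → ℤ) ⧸
        LinearMap.range Y'.mulVecLin) ≃ₗ[ℤ]
      ZMod (p ^ min (e i₁) (e i₂))) := by
  classical
  set N := p ^ min (e i₁) (e i₂) with hN
  haveI : NeZero N := ⟨pow_ne_zero _ hp.pos.ne'⟩
  have hNcast : (N : ℤ) = (p : ℤ) ^ min (e i₁) (e i₂) := by push_cast [hN]; ring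
  have hne12 : i₁ ≠ i₂ := hlt.ne
  have hsucc_ne : i₁.succ ≠ i₂.succ := fun h => hne12 (Fin.succ_injective n h)
  let c : Fin (n + 1) → ℤ := fun k => Fin.cases 1 (fun i => (p : ℤ) ^ e i) k
  have hc0 : c 0 = 1 := rfl
  have hcs : ∀ i : Fin n, c i.succ = (p : ℤ) ^ e i := fun i => rfl
  let L : ({k : Fin (n + 1) // k ≠ i₁.succ ∧ k ≠ i₂.succ} → ℤ) →ₗ[ℤ] ℤ :=
    { toFun := fun x => ∑ k, c k.1 * x k
      map_add' := by
        intro x y; simp [mul_add, Finset.sum_add_distrib]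
      map_smul' := by
        intro m x
        simp only [Pi.smul_apply, smul_eq_mul, RingHom.id_apply, Finset.mul_sum]
        exact Finset.sum_congr rfl fun k _ => by ring }
  have hL : ∀ x, L x = ∑ k, c k.1 * x k := fun x => rfl
  let φ : ({k : Fin (n + 1) // k ≠ i₁.succ ∧ k ≠ i₂.succ} → ℤ) →ₗ[ℤ] ZMod N :=
    ((Int.castRingHom (ZMod N)).toAddMonoidHom.toIntLinearMap).comp L
  have hφ : ∀ x, φ x = ((L x : ℤ) : ZMod N) := fun x => rfl
  have hmv : ∀ (v : Fin n → ℤ) (k : {k : Fin (n + 1) // k ≠ i₁.succ ∧ k ≠ i₂.succ}),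
      Y'.mulVecLin v k = ∑ j, Y k.1 j * v j := by
    intro v k
    simp [Matrix.mulVecLin_apply, Matrix.mulVec, dotProduct, hY']
  have hrow : ∀ (i : Fin n) (v : Fin n → ℤ), (∑ j, Y i.succ j * v j) = v i := by
    intro i v
    simp [hY, ite_mul]
  -- key computation
  have LA : ∀ v : Fin n → ℤ,
      L (Y'.mulVecLin v) = -((p : ℤ) ^ e i₁ * v i₁ + (p : ℤ) ^ e i₂ * v i₂) := by
    intro v
    have hFs : ∀ i : Fin n, c i.succ * ∑ j, Y i.succ j * v j = (p : ℤ) ^ e i * v i := by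
      intro i; rw [hcs, hrow]
    have h1 : L (Y'.mulVecLin v) = ∑ k : {k : Fin (n + 1) // k ≠ i₁.succ ∧ k ≠ i₂.succ},
        (fun k : Fin (n + 1) => c k * ∑ j, Y k j * v j) k.1 := by
      rw [hL]; exact Finset.sum_congr rfl fun k _ => by rw [hmv]
    rw [h1, ← Finset.sum_subtype (Finset.univ \ {i₁.succ, i₂.succ})
      (fun k => by simp [not_or]) (fun k : Fin (n + 1) => c k * ∑ j, Y k j * v j)]
    rw [Finset.sum_sdiff_eq_sub (Finset.subset_univ _),
      Finset.sum_pair hsucc_ne]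
    have h4 : ∑ k : Fin (n + 1), (c k * ∑ j, Y k j * v j) = 0 := by
      rw [Fin.sum_univ_succ]
      have h0 : c 0 * ∑ j, Y 0 j * v j = ∑ j, -((p : ℤ) ^ e j * v j) := by
        rw [hc0, one_mul]
        exact Finset.sum_congr rfl fun j _ => by rw [hY0]; ring
      rw [h0]
      simp only [hFs]
      rw [Finset.sum_neg_distrib, neg_add_cancel]
    rw [h4, hFs, hFs]
    ring
  -- the distinguished index ⟨0, _⟩
  have h0mem : (0 : Fin (n + 1)) ≠ i₁.succ ∧ (0 : Fin (n + 1)) ≠ i₂.succ :=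
    ⟨(Fin.succ_ne_zero i₁).symm, (Fin.succ_ne_zero i₂).symm⟩
  set k₀ : {k : Fin (n + 1) // k ≠ i₁.succ ∧ k ≠ i₂.succ} := ⟨0, h0mem⟩ with hk₀
  have hLsingle : ∀ m : ℤ, L (Pi.single k₀ m) = m := by
    intro m
    rw [hL, Finset.sum_eq_single k₀]
    · rw [Pi.single_eq_same]; exact one_mul m
    · intro k _ hk; rw [Pi.single_eq_of_ne hk, mul_zero]
    · intro h; exact absurd (Finset.mem_univ _) h
  have hsurj : Function.Surjective φ := by
    intro z
    obtain ⟨m, rfl⟩ := ZMod.intCast_surjective (n := N) z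
    exact ⟨Pi.single k₀ m, by rw [hφ, hLsingle]⟩
  have hdvd1 : (N : ℤ) ∣ (p : ℤ) ^ e i₁ := by
    rw [hNcast]; exact pow_dvd_pow _ (min_le_left _ _)
  have hdvd2 : (N : ℤ) ∣ (p : ℤ) ^ e i₂ := by
    rw [hNcast]; exact pow_dvd_pow _ (min_le_right _ _)
  have hrange : LinearMap.range Y'.mulVecLin = LinearMap.ker φ := by
    apply le_antisymm
    · rintro _ ⟨v, rfl⟩
      rw [LinearMap.mem_ker, hφ, LA, ZMod.intCast_zmod_eq_zero_iff_dvd]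
      exact dvd_neg.mpr (dvd_add (hdvd1.mul_right _) (hdvd2.mul_right _))
    · intro x hx
      rw [LinearMap.mem_ker, hφ, ZMod.intCast_zmod_eq_zero_iff_dvd] at hx
      have hne1 : ∀ j : Fin n, ¬(j = i₁ ∨ j = i₂) →
          (j.succ ≠ i₁.succ ∧ j.succ ≠ i₂.succ) := by
        intro j h; push_neg at h
        exact ⟨fun hc => h.1 (Fin.succ_injective n hc),
               fun hc => h.2 (Fin.succ_injective n hc)⟩
      set w : Fin n → ℤ :=
        fun j => if h : j = i₁ ∨ j = i₂ then 0 else x ⟨j.succ, hne1 j h⟩ with hw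
      set y := x - Y'.mulVecLin w with hyd
      have hy : ∀ k : {k : Fin (n + 1) // k ≠ i₁.succ ∧ k ≠ i₂.succ},
          k.1 ≠ 0 → y k = 0 := by
        intro k hk
        obtain ⟨j, hj⟩ := Fin.eq_succ_of_ne_zero hk
        have hj12 : ¬(j = i₁ ∨ j = i₂) := by
          rintro (h | h)
          · exact k.2.1 (by rw [hj, h])
          · exact k.2.2 (by rw [hj, h])
        have hwx : w j = x k := by
          simp only [hw]
          rw [dif_neg hj12]
          congr 1
          exact Subtype.ext hj.symm
        have h2 : Y'.mulVecLin w k = w j := by rw [hmv, hj, hrow]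
        rw [hyd, Pi.sub_apply, h2, hwx, sub_self]
      have hy0 : y k₀ = L x := by
        have hw1 : w i₁ = 0 := by rw [hw]; exact dif_pos (Or.inl rfl)
        have hw2 : w i₂ = 0 := by rw [hw]; exact dif_pos (Or.inr rfl)
        have hLy : L y = L x := by
          rw [hyd, map_sub, LA w, hw1, hw2]
          ring
        rw [← hLy, hL, Finset.sum_eq_single k₀]
        · rw [hk₀, hc0, one_mul]
        · intro k _ hk
          rw [hy k (fun h0 => hk (Subtype.ext h0)), mul_zero]
        · intro h; exact absurd (Finset.mem_univ _) h
      obtain ⟨a, b, hab⟩ : ∃ a b : ℤ,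
          -((p : ℤ) ^ e i₁ * a + (p : ℤ) ^ e i₂ * b) = L x := by
        obtain ⟨t, ht⟩ := hx
        rcases le_total (e i₁) (e i₂) with h | h
        · refine ⟨-t, 0, ?_⟩
          rw [ht, hNcast, min_eq_left h]; ring
        · refine ⟨0, -t, ?_⟩
          rw [ht, hNcast, min_eq_right h]; ring
      set u : Fin n → ℤ := fun j => if j = i₁ then a else if j = i₂ then b else 0 with hu
      have hmu : Y'.mulVecLin u = y := by
        funext k
        rcases eq_or_ne k.1 0 with h0 | h0
        · have hkk : k = k₀ := Subtype.ext h0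
          rw [hmv, hkk]
          have hterm : ∀ j : Fin n, Y (0 : Fin (n+1)) j * u j =
              (if j = i₁ then -((p : ℤ) ^ e i₁ * a) else 0) +
              (if j = i₂ then -((p : ℤ) ^ e i₂ * b) else 0) := by
            intro j
            simp only [hu, hY0]
            by_cases h1 : j = i₁
            · subst h1
              rw [if_pos rfl, if_pos rfl, if_neg hne12, add_zero]; ring
            · rw [if_neg h1, if_neg h1, zero_add]
              by_cases h2 : j = i₂
              · subst h2; rw [if_pos rfl, if_pos rfl]; ring
              · rw [if_neg h2, if_neg h2, mul_zero]
          rw [show (k₀ : Fin (n+1)) = 0 from rfl]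
          rw [Finset.sum_congr rfl (fun j _ => hterm j), Finset.sum_add_distrib,
            Finset.sum_ite_eq' Finset.univ i₁, Finset.sum_ite_eq' Finset.univ i₂]
          rw [if_pos (Finset.mem_univ _), if_pos (Finset.mem_univ _), hy0, ← hab]
          ring
        · obtain ⟨j, hj⟩ := Fin.eq_succ_of_ne_zero h0
          have hj1 : j ≠ i₁ := fun h => k.2.1 (by rw [hj, h])
          have hj2 : j ≠ i₂ := fun h => k.2.2 (by rw [hj, h])
          rw [hmv, hj, hrow, hy k h0]
          simp only [hu]
          rw [if_neg hj1, if_neg hj2]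
      refine ⟨w + u, ?_⟩
      rw [map_add, hmu, hyd]
      abel
  exact ⟨(Submodule.quotEquivOfEq _ _ hrange).trans
    (φ.quotKerEquivOfSurjective hsurj)⟩
end

section
/- Let A be a reduced commutative ring whose only idempotents are 0 and 1 (e.g., a domain). Then every unit of the Laurent polynomial ring A[x₁^{±1}, …, xₙ^{±1}] is of the form u·x₁^{a₁}⋯xₙ^{aₙ} for a unit u ∈ A^× and integers a₁, …, aₙ; that is, the unit group of A[ℤⁿ] is A^× × ℤⁿ. -/
open Finsupp

section MapCoeff

variable {A B G : Type*} [CommSemiring A] [CommSemiring B] [AddCommMonoid G]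

/-- The ring hom `A[G] →+* B[G]` induced by a ring hom `A →+* B` on coefficients. -/
noncomputable def mapCoeff (φ : A →+* B) :
    AddMonoidAlgebra A G →+* AddMonoidAlgebra B G :=
  AddMonoidAlgebra.liftNCRingHom (AddMonoidAlgebra.singleZeroRingHom.comp φ)
    (AddMonoidAlgebra.of B G) (fun _ _ => Commute.all _ _)

lemma mapCoeff_single (φ : A →+* B) (a : G) (b : A) :
    mapCoeff φ (AddMonoidAlgebra.single a b) = AddMonoidAlgebra.single a (φ b) := by
  have h : mapCoeff φ (AddMonoidAlgebra.single a b)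
      = AddMonoidAlgebra.liftNC
          ((AddMonoidAlgebra.singleZeroRingHom.comp φ :
            A →+* AddMonoidAlgebra B G) : A →+ AddMonoidAlgebra B G)
          (⇑(AddMonoidAlgebra.of B G)) (AddMonoidAlgebra.single a b) := rfl
  rw [h, AddMonoidAlgebra.liftNC_single]
  simp [AddMonoidAlgebra.single_mul_single]

lemma mapCoeff_apply (φ : A →+* B) (p : AddMonoidAlgebra A G) (x : G) :
    (mapCoeff φ p).coeff x = φ (p.coeff x) := by
  induction p using AddMonoidAlgebra.induction_linear with
  | zero => simp
  | add p q hp hq =>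
      rw [map_add]
      rw [AddMonoidAlgebra.coeff_add, AddMonoidAlgebra.coeff_add, Finsupp.add_apply, Finsupp.add_apply]
      rw [hp, hq, map_add]
  | single a b =>
      rw [mapCoeff_single]
      rcases eq_or_ne a x with rfl | h
      · simp [AddMonoidAlgebra.coeff_single, Finsupp.single_apply]
      · simp [AddMonoidAlgebra.coeff_single, Finsupp.single_apply, h]

end MapCoeff

section Domain

variable {B G : Type*} [CommRing B] [IsDomain B] [AddCommGroup G]

/-- Over a domain, with a translation-invariant linear order on the exponent group,
any unit of the monoid algebra is a single monomial. -/
lemma monomial_of_mul_eq_one (lo : LinearOrder G)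
    (hadd : ∀ a b c d : G, a < b → c ≤ d → a + c < b + d)
    {p q : AddMonoidAlgebra B G} (h : p * q = 1) :
    ∃ (g : G) (b : B), b ≠ 0 ∧ p = AddMonoidAlgebra.single g b := by
  classical
  have hp : p ≠ 0 := by rintro rfl; rw [zero_mul] at h; exact zero_ne_one h
  have hq : q ≠ 0 := by rintro rfl; rw [mul_zero] at h; exact zero_ne_one h
  have hps : p.coeff.support.Nonempty := Finsupp.support_nonempty_iff.2 (mt AddMonoidAlgebra.coeff_eq_zero.1 hp)
  have hqs : q.coeff.support.Nonempty := Finsupp.support_nonempty_iff.2 (mt AddMonoidAlgebra.coeff_eq_zero.1 hq)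
  set Mp := p.coeff.support.max' hps with hMp
  set Mq := q.coeff.support.max' hqs with hMq
  set mp := p.coeff.support.min' hps with hmp
  set mq := q.coeff.support.min' hqs with hmq
  have haddle : ∀ a b c d : G, a ≤ b → c ≤ d → a + c ≤ b + d := by
    intro a b c d h1 h2
    rcases h1.lt_or_eq with h1 | rfl
    · exact (hadd _ _ _ _ h1 h2).le
    rcases h2.lt_or_eq with h2 | rfl
    · have := hadd c d a a h2 le_rfl
      rw [add_comm c a, add_comm d a] at this
      exact this.le
    · exact le_rfl
  -- coefficient at the sum of maxima
  have hmaxco : (p * q).coeff (Mp + Mq) = p.coeff Mp * q.coeff Mq := by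
    rw [AddMonoidAlgebra.coeff_mul, Finsupp.sum]
    rw [Finset.sum_eq_single_of_mem Mp (p.coeff.support.max'_mem hps)
      (fun a ha hane => ?_)]
    · rw [Finsupp.sum]
      rw [Finset.sum_eq_single_of_mem Mq (q.coeff.support.max'_mem hqs)
        (fun b hb hbne => ?_)]
      · rw [if_pos rfl]
      · rw [if_neg]
        intro hEq
        exact hbne (add_left_cancel hEq)
    · rw [Finsupp.sum]
      apply Finset.sum_eq_zero
      intro b hb
      rw [if_neg]
      intro hEq
      have h1 : a < Mp := lt_of_le_of_ne (Finset.le_max' _ a ha) hane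
      have h2 : b ≤ Mq := Finset.le_max' _ b hb
      exact absurd hEq (ne_of_lt (hadd _ _ _ _ h1 h2))
  -- coefficient at the sum of minima
  have hminco : (p * q).coeff (mp + mq) = p.coeff mp * q.coeff mq := by
    rw [AddMonoidAlgebra.coeff_mul, Finsupp.sum]
    rw [Finset.sum_eq_single_of_mem mp (p.coeff.support.min'_mem hps)
      (fun a ha hane => ?_)]
    · rw [Finsupp.sum]
      rw [Finset.sum_eq_single_of_mem mq (q.coeff.support.min'_mem hqs)
        (fun b hb hbne => ?_)]
      · rw [if_pos rfl]
      · rw [if_neg]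
        intro hEq
        exact hbne (add_left_cancel hEq)
    · rw [Finsupp.sum]
      apply Finset.sum_eq_zero
      intro b hb
      rw [if_neg]
      intro hEq
      have h1 : mp < a := lt_of_le_of_ne (Finset.min'_le _ a ha) (Ne.symm hane)
      have h2 : mq ≤ b := Finset.min'_le _ b hb
      exact absurd hEq.symm (ne_of_lt (hadd _ _ _ _ h1 h2))
  have hone : ∀ x : G, (1 : AddMonoidAlgebra B G).coeff x ≠ 0 → x = 0 := by
    intro x hx
    rw [AddMonoidAlgebra.one_def, AddMonoidAlgebra.coeff_single, Finsupp.single_apply] at hx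
    by_contra hc
    rw [if_neg (fun h0 => hc h0.symm)] at hx
    exact hx rfl
  have hpM : p.coeff Mp ≠ 0 := Finsupp.mem_support_iff.1 (p.coeff.support.max'_mem hps)
  have hqM : q.coeff Mq ≠ 0 := Finsupp.mem_support_iff.1 (q.coeff.support.max'_mem hqs)
  have hpm : p.coeff mp ≠ 0 := Finsupp.mem_support_iff.1 (p.coeff.support.min'_mem hps)
  have hqm : q.coeff mq ≠ 0 := Finsupp.mem_support_iff.1 (q.coeff.support.min'_mem hqs)
  have hmax0 : Mp + Mq = 0 := by
    apply hone
    rw [← h, hmaxco]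
    exact mul_ne_zero hpM hqM
  have hmin0 : mp + mq = 0 := by
    apply hone
    rw [← h, hminco]
    exact mul_ne_zero hpm hqm
  have hle1 : mp ≤ Mp := Finset.min'_le _ _ (p.coeff.support.max'_mem hps)
  have hle2 : mq ≤ Mq := Finset.min'_le _ _ (q.coeff.support.max'_mem hqs)
  have hMpmp : Mp = mp := by
    refine le_antisymm ?_ hle1
    by_contra hc
    have h1 : mp < Mp := lt_of_not_ge hc
    have := hadd mp Mp mq Mq h1 hle2
    rw [hmin0, hmax0] at this
    exact lt_irrefl _ this
  refine ⟨Mp, p.coeff Mp, hpM, ?_⟩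
  rw [← AddMonoidAlgebra.coeff_inj, AddMonoidAlgebra.coeff_single, Finsupp.eq_single_iff]
  refine ⟨fun x hx => ?_, rfl⟩
  rw [Finset.mem_singleton]
  exact le_antisymm (Finset.le_max' _ _ hx) (hMpmp ▸ Finset.min'_le _ _ hx)

end Domain

/-- The lexicographic linear order on `Fin n → ℤ`, as a plain term. -/
noncomputable def lexLO (n : ℕ) : LinearOrder (Fin n → ℤ) :=
  letI : WellFoundedLT (Fin n) := Finite.to_wellFoundedLT
  (inferInstance : LinearOrder (Lex (Fin n → ℤ)))

lemma lexLO_add (n : ℕ) :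
    ∀ a b c d : Fin n → ℤ, (lexLO n).lt a b → (lexLO n).le c d →
      (lexLO n).lt (a + c) (b + d) := by
  letI : WellFoundedLT (Fin n) := Finite.to_wellFoundedLT
  letI : IsOrderedCancelAddMonoid (Lex (Fin n → ℤ)) := inferInstance
  intro a b c d h1 h2
  exact add_lt_add_of_lt_of_le
    (show toLex a < toLex b from h1) (show toLex c ≤ toLex d from h2)

/-- If A is a reduced commutative ring whose only idempotents are 0 and 1, then
every unit of the Laurent polynomial ring A[ℤⁿ] = A[x₁^{±1},…,xₙ^{±1}] is of
the form u·x^a for a unit u of A and a ∈ ℤⁿ. -/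
theorem stmt_15 (A : Type*) [CommRing A] [IsReduced A]
    (hidem : ∀ e : A, IsIdempotentElem e → e = 0 ∨ e = 1) (n : ℕ)
    (f : (AddMonoidAlgebra A (Fin n → ℤ))ˣ) :
    ∃ (u : Aˣ) (a : Fin n → ℤ),
      (f : AddMonoidAlgebra A (Fin n → ℤ)) = AddMonoidAlgebra.single a (u : A) := by
  classical
  rcases subsingleton_or_nontrivial A with hA | hA
  · exact ⟨1, 0, Subsingleton.elim _ _⟩
  set F : AddMonoidAlgebra A (Fin n → ℤ) := (f : AddMonoidAlgebra A (Fin n → ℤ)) with hF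
  set V : AddMonoidAlgebra A (Fin n → ℤ) := ((f⁻¹ : _ˣ) : AddMonoidAlgebra A (Fin n → ℤ)) with hV
  have hFV : F * V = 1 := f.mul_inv
  -- the coefficients of `F` modulo any prime are concentrated at a single exponent
  have keyP : ∀ (P : Ideal A), P.IsPrime → ∃ g : Fin n → ℤ,
      (∀ m : Fin n → ℤ, m ≠ g → Ideal.Quotient.mk P (F.coeff m) = 0) ∧
      Ideal.Quotient.mk P (F.coeff g) * Ideal.Quotient.mk P (V.coeff (-g)) = 1 := by
    intro P hP
    set φ := Ideal.Quotient.mk P with hφ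
    have h1 : (mapCoeff φ F) * (mapCoeff φ V) = 1 := by
      rw [← map_mul, hFV, map_one]
    obtain ⟨g, b, hb, hsingle⟩ := monomial_of_mul_eq_one (lexLO n) (lexLO_add n) h1
    refine ⟨g, fun m hm => ?_, ?_⟩
    · have := mapCoeff_apply φ F m
      rw [hsingle, AddMonoidAlgebra.coeff_single, Finsupp.single_apply, if_neg (fun h0 => hm h0.symm)] at this
      exact this.symm
    · have hg : φ (F.coeff g) = b := by
        have := mapCoeff_apply φ F g
        rw [hsingle, AddMonoidAlgebra.coeff_single, Finsupp.single_apply, if_pos rfl] at this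
        exact this.symm
      have h2 : (AddMonoidAlgebra.single g b * mapCoeff φ V).coeff (0 : Fin n → ℤ) = 1 := by
        rw [← hsingle, h1, AddMonoidAlgebra.one_def, AddMonoidAlgebra.coeff_single, Finsupp.single_apply, if_pos rfl]
      rw [AddMonoidAlgebra.coeff_single_mul_apply, add_zero, mapCoeff_apply] at h2
      rw [hg]
      exact h2
  -- the idempotents
  set e : (Fin n → ℤ) → A := fun m => F.coeff m * V.coeff (-m) with he
  have hidem' : ∀ m, IsIdempotentElem (e m) := by
    intro m
    have hnil : IsNilpotent (e m * e m - e m) := by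
      rw [nilpotent_iff_mem_prime]
      intro P hP
      obtain ⟨g, hg0, hg1⟩ := keyP P hP
      rw [← Ideal.Quotient.eq_zero_iff_mem]
      rcases eq_or_ne m g with rfl | hm
      · simp only [map_sub, map_mul, he, hg1]
        ring
      · simp only [map_sub, map_mul, he, hg0 m hm]
        ring
    have := IsReduced.eq_zero _ ⟨_, hnil.choose_spec⟩
    rwa [sub_eq_zero] at this
  -- the sum of idempotents is 1
  have hsum : ∑ m ∈ F.coeff.support, e m = 1 := by
    have h0 : (F * V).coeff (0 : Fin n → ℤ) = 1 := by
      rw [hFV, AddMonoidAlgebra.one_def, AddMonoidAlgebra.coeff_single, Finsupp.single_apply, if_pos rfl]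
    calc ∑ m ∈ F.coeff.support, e m
        = ∑ m ∈ F.coeff.support, (AddMonoidAlgebra.single m (F.coeff m) * V).coeff (0 : Fin n → ℤ) := by
          refine Finset.sum_congr rfl fun m _ => ?_
          rw [AddMonoidAlgebra.coeff_single_mul_apply, add_zero]
      _ = ((∑ m ∈ F.coeff.support, AddMonoidAlgebra.single m (F.coeff m)) * V).coeff (0 : Fin n → ℤ) := by
          rw [Finset.sum_mul]
          rw [AddMonoidAlgebra.coeff_sum]
          exact (Finset.sum_apply' _).symm
      _ = (F * V).coeff (0 : Fin n → ℤ) := by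
          exact congrArg (fun z => z.coeff (0 : Fin n → ℤ))
            (congrArg (· * V) (AddMonoidAlgebra.sum_coeff_single F))
      _ = 1 := h0
  -- pick the exponent where the idempotent is 1
  have hex : ∃ a ∈ F.coeff.support, e a = 1 := by
    by_contra hc
    push_neg at hc
    have : ∑ m ∈ F.coeff.support, e m = 0 := by
      apply Finset.sum_eq_zero
      intro m hm
      rcases hidem (e m) (hidem' m) with h0 | h1
      · exact h0
      · exact absurd h1 (hc m hm)
    rw [hsum] at this
    exact one_ne_zero this
  obtain ⟨a, ha, hea⟩ := hex
  -- all other coefficients vanish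
  have hvanish : ∀ m : Fin n → ℤ, m ≠ a → F.coeff m = 0 := by
    intro m hm
    have hnil : IsNilpotent (F.coeff m) := by
      rw [nilpotent_iff_mem_prime]
      intro P hP
      obtain ⟨g, hg0, hg1⟩ := keyP P hP
      have hag : a = g := by
        by_contra hc
        have h1 : Ideal.Quotient.mk P (e a) = 0 := by
          rw [he]
          simp only [map_mul, hg0 a hc, zero_mul]
        rw [hea, map_one] at h1
        exact one_ne_zero h1
      rw [← Ideal.Quotient.eq_zero_iff_mem]
      exact hg0 m (hag ▸ hm)
    exact IsReduced.eq_zero _ ⟨_, hnil.choose_spec⟩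
  -- `F a` is a unit
  have hu : IsUnit (F.coeff a) := IsUnit.of_mul_eq_one (V.coeff (-a)) hea
  refine ⟨hu.unit, a, ?_⟩
  rw [← AddMonoidAlgebra.coeff_inj, AddMonoidAlgebra.coeff_single, Finsupp.eq_single_iff]
  constructor
  · intro x hx
    rw [Finset.mem_singleton]
    by_contra hc
    exact Finsupp.mem_support_iff.1 hx (hvanish x hc)
  · exact (hu.unit_spec)
end

section
/- Let p be a prime, let n ≥ 1, and let e₁ ≤ ⋯ ≤ eₙ be nonnegative integers. Consider the map d : ℤ/p^{e₁} × ⋯ × ℤ/p^{eₙ} → ∏_{1≤i<j≤n} ℤ/p^{e_i} sending (x₁, …, xₙ) to the tuple whose (i,j)-entry is the reduction of xᵢ − xⱼ modulo p^{e_i} (using e_i = min(e_i, e_j) since e_i ≤ e_j), and the map δ : ℤ → ℤ/p^{e₁} × ⋯ × ℤ/p^{eₙ} sending c to (c mod p^{e₁}, …, c mod p^{eₙ}). Then ker(d) = im(δ). -/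
/-- For e₁ ≤ ⋯ ≤ eₙ, a tuple (x₁,…,xₙ) ∈ ∏ᵢ ℤ/p^{eᵢ} has all pairwise
differences xᵢ − xⱼ (i < j) zero in ℤ/p^{eᵢ} if and only if it comes from a
single integer c reduced modulo each p^{eᵢ}: ker(d) = im(δ). -/
theorem stmt_18 (p : ℕ) (hp : p.Prime) (n : ℕ) (hn : 1 ≤ n)
    (e : Fin n → ℕ) (he : Monotone e)
    (x : ∀ i : Fin n, ZMod (p ^ e i)) :
    (∀ i j : Fin n, (h : i < j) →
        x i - ZMod.castHom (pow_dvd_pow p (he h.le)) (ZMod (p ^ e i)) (x j) = 0)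
      ↔ ∃ c : ℤ, ∀ i, x i = (c : ZMod (p ^ e i)) := by
  haveI : ∀ i, NeZero (p ^ e i) := fun i => ⟨pow_ne_zero _ hp.ne_zero⟩
  constructor
  · intro h
    set L : Fin n := ⟨n - 1, by omega⟩ with hL
    obtain ⟨c, hc⟩ : ∃ c : ℤ, x L = (c : ZMod (p ^ e L)) := by
      refine ⟨((x L).val : ℤ), ?_⟩
      push_cast
      rw [ZMod.natCast_val, ZMod.cast_id]
    refine ⟨c, fun i => ?_⟩
    have hle : i ≤ L := by
      rw [Fin.le_def]
      have := i.isLt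
      simp only [hL]
      omega
    rcases lt_or_eq_of_le hle with hlt | heq
    · have h' := h i L hlt
      rw [sub_eq_zero] at h'
      rw [h', hc, map_intCast]
    · rw [heq, hc]
  · rintro ⟨c, hc⟩ i j hij
    rw [hc i, hc j, map_intCast, sub_self]
end

section
/- Let n ≥ 1, let ρ₀, …, ρₙ be positive integers with gcd(ρ₀, …, ρₙ) = 1, set dᵢ := gcd of {ρⱼ : j ≠ i}, sᵢ := lcm of {dⱼ : j ≠ i}, and s := lcm(s₀, …, sₙ). For an integer ℓ, let bᵢ(ℓ) be the unique integer with 0 ≤ bᵢ(ℓ) < dᵢ such that dᵢ divides ℓ − bᵢ(ℓ)·ρᵢ, and set ℓ' := ℓ − Σᵢ bᵢ(ℓ)·ρᵢ. Then s divides ℓ'. -/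
/-- With dᵢ, sᵢ, s as in the reduction-of-weights lemma, and bᵢ(ℓ) the unique
integer with 0 ≤ bᵢ(ℓ) < dᵢ and dᵢ ∣ ℓ − bᵢ(ℓ)·ρᵢ, the integer
ℓ' = ℓ − Σᵢ bᵢ(ℓ)·ρᵢ is divisible by s = lcm(s₀,…,sₙ). -/
theorem stmt_19 (n : ℕ) (hn : 1 ≤ n) (ρ : Fin (n + 1) → ℕ) (hρ : ∀ i, 0 < ρ i)
    (hgcd : Finset.univ.gcd ρ = 1) (d s : Fin (n + 1) → ℕ)
    (hd : ∀ i, d i = (Finset.univ.erase i).gcd ρ)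
    (hs : ∀ i, s i = (Finset.univ.erase i).lcm d)
    (ℓ : ℤ) (b : Fin (n + 1) → ℤ)
    (hb : ∀ i, 0 ≤ b i ∧ b i < (d i : ℤ) ∧ (d i : ℤ) ∣ ℓ - b i * (ρ i : ℤ)) :
    ((Finset.univ.lcm s : ℕ) : ℤ) ∣ ℓ - ∑ i, b i * (ρ i : ℤ) := by
  -- key : each d j divides ℓ'
  have key : ∀ j : Fin (n + 1), (d j : ℤ) ∣ ℓ - ∑ i, b i * (ρ i : ℤ) := by
    intro j
    have h1 : (d j : ℤ) ∣ ℓ - b j * (ρ j : ℤ) := (hb j).2.2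
    have h2 : (d j : ℤ) ∣ ∑ i ∈ Finset.univ.erase j, b i * (ρ i : ℤ) := by
      refine Finset.dvd_sum ?_
      intro i hi
      have : (d j : ℤ) ∣ (ρ i : ℤ) := by
        rw [hd j]
        exact_mod_cast Int.natCast_dvd_natCast.mpr (Finset.gcd_dvd hi)
      exact Dvd.dvd.mul_left this (b i)
    have hsum : ∑ i, b i * (ρ i : ℤ) =
        b j * (ρ j : ℤ) + ∑ i ∈ Finset.univ.erase j, b i * (ρ i : ℤ) := by
      rw [← Finset.add_sum_erase _ _ (Finset.mem_univ j)]
    have := dvd_sub h1 h2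
    rw [hsum]
    have : ℓ - (b j * (ρ j : ℤ) + ∑ i ∈ Finset.univ.erase j, b i * (ρ i : ℤ)) =
        (ℓ - b j * (ρ j : ℤ)) - ∑ i ∈ Finset.univ.erase j, b i * (ρ i : ℤ) := by ring
    rw [this]
    exact dvd_sub h1 h2
  rw [Int.natCast_dvd]
  refine Finset.lcm_dvd ?_
  intro i _
  rw [hs i]
  refine Finset.lcm_dvd ?_
  intro j hj
  rw [← Int.natCast_dvd]
  exact key j
end
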